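/- Let 𝔤 be a simplicial Lie algebra over a commutative ring whose Moore complex has length 1, i.e. N𝔤_2 = ⋂_{i=1}^{2} ker ∂_i = 0. Then (N𝔤_1, 𝔤_0, δ_1, action) is a crossed module of Lie algebras, where δ_1 : N𝔤_1 → 𝔤_0 is the restriction of ∂_0 and 𝔤_0 acts on N𝔤_1 by x · h = [s_0(x), h]. In particular the Lie-algebra Peiffer identity holds: for all h, h' ∈ N𝔤_1 = ker ∂_1, [s_0(∂_0 h), h'] = [h, h'], and equivariance holds: ∂_0([s_0(x), h]) = [x, ∂_0 h] for all x ∈ 𝔤_0, h ∈ N𝔤_1. -/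

import Mathlib

/-- The underlying family of Lie algebras of a simplicial Lie algebra over `R`. -/
structure PreSimplicialLieAlgebra (R : Type) [inst : CommRing R] where
  g : ℕ → Type
  lieRing : ∀ n, LieRing (g n)
  lieAlg : ∀ n, @LieAlgebra R (g n) inst (lieRing n)

attribute [instance] PreSimplicialLieAlgebra.lieRing PreSimplicialLieAlgebra.lieAlg

/-- A simplicial Lie algebra over a commutative ring `R`: a family of Lie `R`-algebras
`g n` with face morphisms `d n i : g (n+1) →ₗ⁅R⁆ g n` (for `i ≤ n+1`) and degeneracy
morphisms `s n i : g n →ₗ⁅R⁆ g (n+1)` (for `i ≤ n`) satisfying the simplicial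
identities. -/
structure SimplicialLieAlgebra (R : Type) [CommRing R]
    extends PreSimplicialLieAlgebra R where
  d : ∀ n : ℕ, ℕ → (g (n+1) →ₗ⁅R⁆ g n)
  s : ∀ n : ℕ, ℕ → (g n →ₗ⁅R⁆ g (n+1))
  dd : ∀ (n i j : ℕ), i ≤ j → j ≤ n + 1 →
    (d n i).comp (d (n+1) (j+1)) = (d n j).comp (d (n+1) i)
  ss : ∀ (n i j : ℕ), i ≤ j → j ≤ n →
    (s (n+1) i).comp (s n j) = (s (n+1) (j+1)).comp (s n i)
  ds_lt : ∀ (n i j : ℕ), i ≤ j → j ≤ n →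
    (d (n+1) i).comp (s (n+1) (j+1)) = (s n j).comp (d n i)
  ds_self : ∀ (n j : ℕ), j ≤ n → (d n j).comp (s n j) = LieHom.id
  ds_succ : ∀ (n j : ℕ), j ≤ n → (d n (j+1)).comp (s n j) = LieHom.id
  ds_gt : ∀ (n i j : ℕ), j < i → i ≤ n + 1 →
    (d (n+1) (i+1)).comp (s (n+1) j) = (s n j).comp (d n i)

/-- The Moore complex of a simplicial Lie algebra:
`N 𝔤 n = ⋂_{i=1}^{n} ker ∂ᵢ ⊆ 𝔤_n`, with `N 𝔤 0 = 𝔤_0`. -/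
def SimplicialLieAlgebra.N {R : Type} [CommRing R] (X : SimplicialLieAlgebra R) :
    (n : ℕ) → Set (X.g n)
  | 0 => Set.univ
  | (n+1) => {x | ∀ i ∈ Finset.Icc 1 (n+1), X.d n i x = 0}

/-!
The crossed-module axioms other than the Peiffer identity follow from the simplicial identities
alone. For the Peiffer identity, given `h, h' ∈ N𝔤₁` the element `⁅s₀h - s₁h, s₀h'⁆ ∈ 𝔤₂` lies
in `N𝔤₂`, and its face `∂₀` is `⁅h, h'⁆ - ⁅s₀∂₀h, h'⁆`; so `N𝔤₂ = 0` forces the identity.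
-/

namespace SimplicialLieAlgebra

variable {R : Type} [CommRing R] (X : SimplicialLieAlgebra R)

theorem d_s_self_apply {n j : ℕ} (hj : j ≤ n) (y : X.g n) : X.d n j (X.s n j y) = y :=
  DFunLike.congr_fun (X.ds_self n j hj) y

theorem d_succ_s_apply {n j : ℕ} (hj : j ≤ n) (y : X.g n) : X.d n (j + 1) (X.s n j y) = y :=
  DFunLike.congr_fun (X.ds_succ n j hj) y

theorem d_s_succ_apply {n i j : ℕ} (hij : i ≤ j) (hj : j ≤ n) (y : X.g (n + 1)) :
    X.d (n + 1) i (X.s (n + 1) (j + 1) y) = X.s n j (X.d n i y) :=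
  DFunLike.congr_fun (X.ds_lt n i j hij hj) y

theorem d_succ_s_apply_of_lt {n i j : ℕ} (hji : j < i) (hi : i ≤ n + 1) (y : X.g (n + 1)) :
    X.d (n + 1) (i + 1) (X.s (n + 1) j y) = X.s n j (X.d n i y) :=
  DFunLike.congr_fun (X.ds_gt n i j hji hi) y

theorem mem_N_one_iff {h : X.g 1} : h ∈ X.N 1 ↔ X.d 0 1 h = 0 := by
  simp [N]

theorem mem_N_two_iff {u : X.g 2} : u ∈ X.N 2 ↔ X.d 1 1 u = 0 ∧ X.d 1 2 u = 0 := by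
  simp only [N, Finset.mem_Icc, Set.mem_ofPred_eq]
  refine ⟨fun hu => ⟨hu 1 (by omega), hu 2 (by omega)⟩, ?_⟩
  rintro ⟨hu₁, hu₂⟩ i ⟨hi₁, hi₂⟩
  obtain rfl | rfl : i = 1 ∨ i = 2 := by omega
  exacts [hu₁, hu₂]

theorem lie_s_zero_mem_N_one (x : X.g 0) {h : X.g 1} (hh : h ∈ X.N 1) :
    ⁅X.s 0 0 x, h⁆ ∈ X.N 1 := by
  rw [mem_N_one_iff] at hh ⊢
  rw [LieHom.map_lie, hh, lie_zero]

theorem d_zero_lie_s_zero (x : X.g 0) (h : X.g 1) :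
    X.d 0 0 ⁅X.s 0 0 x, h⁆ = ⁅x, X.d 0 0 h⁆ := by
  rw [LieHom.map_lie, X.d_s_self_apply le_rfl]

def peifferElement (h h' : X.g 1) : X.g 2 :=
  ⁅X.s 1 0 h - X.s 1 1 h, X.s 1 0 h'⁆

theorem peifferElement_mem_N_two {h h' : X.g 1} (hh : h ∈ X.N 1) (hh' : h' ∈ X.N 1) :
    X.peifferElement h h' ∈ X.N 2 := by
  rw [mem_N_one_iff] at hh hh'
  rw [mem_N_two_iff, peifferElement, LieHom.map_lie, LieHom.map_lie, map_sub, map_sub]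
  constructor
  · rw [X.d_succ_s_apply zero_le_one, X.d_s_self_apply le_rfl, sub_self, zero_lie]
  · rw [X.d_succ_s_apply le_rfl, X.d_succ_s_apply_of_lt (n := 0) zero_lt_one le_rfl,
      X.d_succ_s_apply_of_lt (n := 0) zero_lt_one le_rfl, hh, hh', map_zero, lie_zero]

theorem d_zero_peifferElement (h h' : X.g 1) :
    X.d 1 0 (X.peifferElement h h') = ⁅h, h'⁆ - ⁅X.s 0 0 (X.d 0 0 h), h'⁆ := by
  rw [peifferElement, LieHom.map_lie, map_sub, X.d_s_self_apply zero_le_one,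
    X.d_s_self_apply zero_le_one, X.d_s_succ_apply (n := 0) le_rfl le_rfl, sub_lie]

theorem lie_s_zero_d_zero_eq_lie_of_N_two_subset {h h' : X.g 1} (hlen : X.N 2 ⊆ {0})
    (hh : h ∈ X.N 1) (hh' : h' ∈ X.N 1) :
    ⁅X.s 0 0 (X.d 0 0 h), h'⁆ = ⁅h, h'⁆ := by
  have hzero : X.peifferElement h h' = 0 :=
    hlen (X.peifferElement_mem_N_two hh hh')
  have hface := X.d_zero_peifferElement h h'
  rw [hzero, map_zero, eq_comm, sub_eq_zero] at hface
  exact hface.symm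

end SimplicialLieAlgebra

/-- if the Moore complex of a simplicial Lie algebra `𝔤` has length 1
(`N𝔤_2 = 0`), then `(N𝔤_1, 𝔤_0, δ₁ = ∂₀|_{N𝔤_1},` action `x · h = ⁅s₀x, h⁆)` is a
crossed module of Lie algebras: the action preserves `N𝔤_1`, the Peiffer identity
`⁅s₀(∂₀h), h'⁆ = ⁅h, h'⁆` holds on `N𝔤_1`, and equivariance
`∂₀⁅s₀x, h⁆ = ⁅x, ∂₀h⁆` holds. -/
theorem lie_length_one_gives_crossed_module (R : Type) [CommRing R]
    (X : SimplicialLieAlgebra R) (hlen : X.N 2 = {0}) :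
    (∀ (x : X.g 0), ∀ h ∈ X.N 1, ⁅X.s 0 0 x, h⁆ ∈ X.N 1) ∧
    (∀ h ∈ X.N 1, ∀ h' ∈ X.N 1, ⁅X.s 0 0 (X.d 0 0 h), h'⁆ = ⁅h, h'⁆) ∧
    (∀ (x : X.g 0), ∀ h ∈ X.N 1, X.d 0 0 ⁅X.s 0 0 x, h⁆ = ⁅x, X.d 0 0 h⁆) :=
  ⟨fun x _ hh => X.lie_s_zero_mem_N_one x hh,
    fun _ hh _ hh' => X.lie_s_zero_d_zero_eq_lie_of_N_two_subset hlen.subset hh hh',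
    fun x h _ => X.d_zero_lie_s_zero x h⟩
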